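/- Let 1 < q < p and c₂ > 0 be real numbers. Then for every σ > p there exists M > 0 such that σ·F₂(ξ) > f₂(ξ)·ξ for every ξ ≥ M. Consequently f₂ does not satisfy the Ambrosetti–Rabinowitz condition: there exist no σ > p and M > 0 with σ·F₂(ξ) ≤ f₂(ξ)·ξ for all ξ ≥ M. -/

import Mathlib

open intervalIntegral

/-- For `f₂(t) = t^{p-1}·log(1+t) + c₂·t^{q-1}` with `1 < q < p`, `c₂ > 0`, and
`F₂(ξ) = ∫₀^ξ f₂(t) dt`: for every `σ > p` there is `M > 0` with
`σ·F₂(ξ) > f₂(ξ)·ξ` for all `ξ ≥ M`; hence `f₂` does not satisfy the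
Ambrosetti–Rabinowitz condition. -/
theorem stmt_11 (p q c₂ : ℝ) (hq : 1 < q) (hqp : q < p) (hc₂ : 0 < c₂)
    (f₂ F₂ : ℝ → ℝ)
    (hf₂ : ∀ t : ℝ, 0 ≤ t → f₂ t = t ^ (p - 1) * Real.log (1 + t) + c₂ * t ^ (q - 1))
    (hF₂ : ∀ ξ : ℝ, 0 ≤ ξ → F₂ ξ = ∫ t in (0:ℝ)..ξ, f₂ t) :
    (∀ σ > p, ∃ M > 0, ∀ ξ ≥ M, σ * F₂ ξ > f₂ ξ * ξ) ∧
    ¬ ∃ σ > p, ∃ M > 0, ∀ ξ ≥ M, σ * F₂ ξ ≤ f₂ ξ * ξ := by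
  have hp1 : 1 < p := hq.trans hqp
  have hp0 : 0 < p := by linarith
  have hq0 : 0 < q := by linarith
  have key : ∀ σ > p, ∃ M > 0, ∀ ξ ≥ M, σ * F₂ ξ > f₂ ξ * ξ := by
    intro σ hσ
    have hσ0 : 0 < σ := by linarith
    set M := Real.exp (σ / (p * (σ - p))) with hMdef
    have hM1 : 1 ≤ M := Real.one_le_exp (div_nonneg hσ0.le (by nlinarith))
    refine ⟨M, by linarith, ?_⟩
    intro ξ hξM
    have hξ1 : 1 ≤ ξ := le_trans hM1 hξM
    have hξ0 : 0 < ξ := by linarith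
    have h1t : ∀ t : ℝ, 0 ≤ t → (0:ℝ) < 1 + t := fun t ht => by linarith
    -- functions
    set H : ℝ → ℝ := fun t => t ^ p * Real.log (1 + t) / p - t ^ p / p ^ 2 + c₂ * t ^ q / q
      with hHdef
    set h : ℝ → ℝ := fun t =>
        t ^ (p-1) * Real.log (1 + t) + t ^ p / (p * (1 + t)) - t ^ (p-1) / p + c₂ * t ^ (q-1)
      with hhdef
    set g : ℝ → ℝ := fun t => t ^ (p-1) * Real.log (1 + t) + c₂ * t ^ (q-1) with hgdef
    have huIcc : Set.uIcc (0:ℝ) ξ = Set.Icc 0 ξ := Set.uIcc_of_le hξ0.le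
    -- continuity helpers
    have crpow : ∀ r : ℝ, 0 ≤ r → ContinuousOn (fun t : ℝ => t ^ r) (Set.Icc 0 ξ) := by
      intro r hr t ht
      exact (Real.continuousAt_rpow_const t r (Or.inr hr)).continuousWithinAt
    have clog : ContinuousOn (fun t : ℝ => Real.log (1 + t)) (Set.Icc 0 ξ) := by
      apply ContinuousOn.log
      · exact (continuous_const.add continuous_id).continuousOn
      · intro t ht
        exact (h1t t ht.1).ne'
    have hcont_g : ContinuousOn g (Set.Icc 0 ξ) := by
      exact ((crpow (p-1) (by linarith)).mul clog).add
        (continuousOn_const.mul (crpow (q-1) (by linarith)))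
    have hden : ContinuousOn (fun t : ℝ => p * (1 + t)) (Set.Icc 0 ξ) :=
      (continuous_const.mul (continuous_const.add continuous_id)).continuousOn
    have hdenne : ∀ t ∈ Set.Icc (0:ℝ) ξ, p * (1 + t) ≠ 0 := by
      intro t ht
      have := h1t t ht.1
      positivity
    have hcont_h : ContinuousOn h (Set.Icc 0 ξ) :=
      ((((crpow (p-1) (by linarith)).mul clog).add
        ((crpow p hp0.le).div hden hdenne)).sub
        ((crpow (p-1) (by linarith)).div_const p)).add
        (continuousOn_const.mul (crpow (q-1) (by linarith)))
    -- derivative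
    have hderiv : ∀ t ∈ Set.uIcc (0:ℝ) ξ, HasDerivAt H (h t) t := by
      intro t ht
      rw [huIcc] at ht
      have ht0 : 0 ≤ t := ht.1
      have h1t' : (0:ℝ) < 1 + t := h1t t ht0
      have dp : HasDerivAt (fun x : ℝ => x ^ p) (p * t ^ (p-1)) t :=
        Real.hasDerivAt_rpow_const (Or.inr hp1.le)
      have dq' : HasDerivAt (fun x : ℝ => x ^ q) (q * t ^ (q-1)) t :=
        Real.hasDerivAt_rpow_const (Or.inr hq.le)
      have dadd : HasDerivAt (fun x : ℝ => 1 + x) 1 t := by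
        simpa using (hasDerivAt_id t).const_add (1:ℝ)
      have dlog : HasDerivAt (fun x : ℝ => Real.log (1 + x)) (1 / (1 + t)) t := by
        have := (Real.hasDerivAt_log h1t'.ne').comp t dadd
        simpa [Function.comp_def] using this
      have dH : HasDerivAt H
          ((p * t ^ (p-1) * Real.log (1+t) + t ^ p * (1/(1+t))) / p
            - (p * t ^ (p-1)) / p ^ 2 + c₂ * (q * t ^ (q-1)) / q) t := by
        exact (((dp.mul dlog).div_const p).sub (dp.div_const (p^2))).add
          ((dq'.const_mul c₂).div_const q)
      convert dH using 1
      rw [hhdef]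
      field_simp
    -- H 0 = 0
    have hH0 : H 0 = 0 := by
      rw [hHdef]
      simp [Real.zero_rpow hp0.ne', Real.zero_rpow hq0.ne']
    -- integrability
    have hint_h : IntervalIntegrable h MeasureTheory.volume 0 ξ := by
      apply ContinuousOn.intervalIntegrable
      rwa [huIcc]
    have hint_g : IntervalIntegrable g MeasureTheory.volume 0 ξ := by
      apply ContinuousOn.intervalIntegrable
      rwa [huIcc]
    -- h ≤ g on Icc
    have hle : ∀ t ∈ Set.Icc (0:ℝ) ξ, h t ≤ g t := by
      intro t ht
      have ht0 : 0 ≤ t := ht.1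
      have h1t' : (0:ℝ) < 1 + t := h1t t ht0
      rw [hhdef, hgdef]
      have hkey : t ^ p / (p * (1 + t)) ≤ t ^ (p-1) / p := by
        rw [div_le_div_iff₀ (by positivity) hp0]
        have htp : t ^ p = t ^ (p-1) * t := by
          rcases eq_or_lt_of_le ht0 with h0 | h0
          · rw [← h0, Real.zero_rpow hp0.ne', Real.zero_rpow (by linarith : p - 1 ≠ 0)]
            ring
          · rw [← Real.rpow_add_one h0.ne' (p-1), sub_add_cancel]
        rw [htp]
        have : 0 ≤ t ^ (p-1) := Real.rpow_nonneg ht0 _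
        nlinarith
      linarith
    -- chain of inequalities
    have hFval : F₂ ξ = ∫ t in (0:ℝ)..ξ, g t := by
      rw [hF₂ ξ hξ0.le]
      apply intervalIntegral.integral_congr
      intro t ht
      rw [huIcc] at ht
      rw [hf₂ t ht.1, hgdef]
    have hint_eq : (∫ t in (0:ℝ)..ξ, h t) = H ξ - H 0 :=
      intervalIntegral.integral_eq_sub_of_hasDerivAt hderiv hint_h
    have hFlb : H ξ ≤ F₂ ξ := by
      rw [hFval]
      calc H ξ = H ξ - H 0 := by rw [hH0]; ring
        _ = ∫ t in (0:ℝ)..ξ, h t := hint_eq.symm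
        _ ≤ ∫ t in (0:ℝ)..ξ, g t :=
            intervalIntegral.integral_mono_on hξ0.le hint_h hint_g hle
    -- log lower bound
    have hL : σ / (p * (σ - p)) ≤ Real.log (1 + ξ) := by
      calc σ / (p * (σ - p)) = Real.log M := (Real.log_exp _).symm
        _ ≤ Real.log ξ := Real.log_le_log (by linarith) hξM
        _ ≤ Real.log (1 + ξ) := Real.log_le_log hξ0 (by linarith)
    -- final numeric inequality
    set A := ξ ^ p with hA
    set B := ξ ^ q with hB
    set L := Real.log (1 + ξ) with hLdef
    have hApos : 0 < A := Real.rpow_pos_of_pos hξ0 p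
    have hBpos : 0 < B := Real.rpow_pos_of_pos hξ0 q
    have hL' : σ ≤ p * (σ - p) * L := by
      rw [div_le_iff₀ (by nlinarith : (0:ℝ) < p * (σ - p))] at hL
      linarith [hL]
    have hfval : f₂ ξ * ξ = A * L + c₂ * B := by
      rw [hf₂ ξ hξ0.le]
      have hAp : ξ ^ (p-1) * ξ = A := by
        rw [hA, ← Real.rpow_add_one hξ0.ne' (p-1), sub_add_cancel]
      have hBq : ξ ^ (q-1) * ξ = B := by
        rw [hB, ← Real.rpow_add_one hξ0.ne' (q-1), sub_add_cancel]
      rw [← hAp, ← hBq]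
      ring
    have hHval : H ξ = A * L / p - A / p ^ 2 + c₂ * B / q := rfl
    have hfinal : f₂ ξ * ξ < σ * H ξ := by
      rw [hfval, hHval, ← sub_pos]
      have heq : σ * (A * L / p - A / p ^ 2 + c₂ * B / q) - (A * L + c₂ * B)
          = (A * (p * (σ - p) * L - σ) * q + c₂ * B * (σ - q) * p ^ 2) / (p ^ 2 * q) := by
        field_simp
        ring
      rw [heq]
      apply div_pos _ (by positivity)
      have h1 : 0 ≤ A * (p * (σ - p) * L - σ) * q := by
        apply mul_nonneg (mul_nonneg hApos.le (by linarith)) hq0.le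
      have h2 : 0 < c₂ * B * (σ - q) * p ^ 2 := by
        apply mul_pos (mul_pos (mul_pos hc₂ hBpos) (by linarith)) (by positivity)
      linarith
    calc f₂ ξ * ξ < σ * H ξ := hfinal
      _ ≤ σ * F₂ ξ := by nlinarith
  refine ⟨key, ?_⟩
  rintro ⟨σ, hσ, M', hM', hAR⟩
  obtain ⟨M, hM, hgt⟩ := key σ hσ
  have h1 := hgt (max M M') (le_max_left _ _)
  have h2 := hAR (max M M') (le_max_right _ _)
  linarith
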